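/- Let n be odd and a₁, …, aₙ be nonzero integers. Define the continued fraction F(c₁,…,cₙ) = 1/(c₁ + 1/(c₂ + ⋯ + 1/cₙ)). If F(2a₁, a₂, 2a₃, a₄, …, 2aₙ) = β/(2α) in lowest terms (with the odd-indexed entries doubled), then F(a₁, 2a₂, a₃, 2a₄, …, aₙ) = β/α, i.e., doubling instead the even-indexed entries and halving the odd-indexed ones exactly halves the denominator of the continued fraction value while keeping the numerator. -/
import Mathlib


/-- The continued fraction `1/(c₁ + 1/(c₂ + ⋯ + 1/cₙ))`. -/
def cf : List ℚ → ℚ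
  | [] => 0
  | c :: l => 1 / (c + cf l)

/-- Double every entry at (0-indexed) even position if `b = true`,
every entry at odd position if `b = false`. -/
def dd (b : Bool) : List ℚ → List ℚ
  | [] => []
  | c :: l => (if b then 2 * c else c) :: dd (!b) l

/-- Key identity: doubling the odd-position entries gives twice the value of
doubling the even-position entries, unconditionally. -/
lemma cf_dd : ∀ l : List ℚ, cf (dd false l) = 2 * cf (dd true l) := by
  intro l
  induction l with
  | nil => simp [cf, dd]
  | cons c m ih =>
    show cf (c :: dd true m) = 2 * cf (2 * c :: dd false m)
    rw [cf, cf, ih]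
    set x := cf (dd true m) with hx
    rcases eq_or_ne (c + x) 0 with h0 | h0
    · rw [h0]
      have : 2 * c + 2 * x = 0 := by linear_combination 2 * h0
      rw [this]
      simp
    · have h1 : 2 * c + 2 * x ≠ 0 := by
        intro hh; exact h0 (by linear_combination hh / 2)
      field_simp

lemma dd_ofFn : ∀ (n : ℕ) (g : Fin n → ℚ),
    dd true (List.ofFn g) = List.ofFn (fun i => if i.val % 2 = 0 then 2 * g i else g i)
    ∧ dd false (List.ofFn g) = List.ofFn (fun i => if i.val % 2 = 0 then g i else 2 * g i) := by
  intro n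
  induction n with
  | zero => intro g; simp [dd]
  | succ n ih =>
    intro g
    rw [List.ofFn_succ]
    obtain ⟨ih1, ih2⟩ := ih (fun i => g i.succ)
    constructor
    · show (if true then 2 * g 0 else g 0) :: dd false (List.ofFn fun i => g i.succ) = _
      rw [ih2, List.ofFn_succ]
      simp only [if_true, Fin.val_zero]
      congr 1
      congr 1
      funext i
      have : (i.succ : Fin (n + 1)).val = i.val + 1 := rfl
      rw [this]
      rcases Nat.even_or_odd i.val with he | ho
      · have h1 : i.val % 2 = 0 := Nat.even_iff.mp he
        have h2 : (i.val + 1) % 2 ≠ 0 := by omega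
        simp [h1, h2]
      · have h1 : i.val % 2 ≠ 0 := by have := Nat.odd_iff.mp ho; omega
        have h2 : (i.val + 1) % 2 = 0 := by have := Nat.odd_iff.mp ho; omega
        simp [h1, h2]
    · show (if false then 2 * g 0 else g 0) :: dd true (List.ofFn fun i => g i.succ) = _
      rw [ih1, List.ofFn_succ]
      simp only [if_false, Fin.val_zero]
      congr 1
      congr 1
      funext i
      have : (i.succ : Fin (n + 1)).val = i.val + 1 := rfl
      rw [this]
      rcases Nat.even_or_odd i.val with he | ho
      · have h1 : i.val % 2 = 0 := Nat.even_iff.mp he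
        have h2 : (i.val + 1) % 2 ≠ 0 := by omega
        simp [h1, h2]
      · have h1 : i.val % 2 ≠ 0 := by have := Nat.odd_iff.mp ho; omega
        have h2 : (i.val + 1) % 2 = 0 := by have := Nat.odd_iff.mp ho; omega
        simp [h1, h2]

/-- If `n` is odd, the `aᵢ` are nonzero integers, and
`[2a₁, a₂, 2a₃, …, 2aₙ] = β/(2α)` in lowest terms, then
`[a₁, 2a₂, a₃, …, aₙ] = β/α`. -/
theorem stmt_6 (n : ℕ) (hn : Odd n) (a : Fin n → ℤ) (ha : ∀ i, a i ≠ 0)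
    (α β : ℤ) (hα : α ≠ 0) (hcop : IsCoprime β (2 * α))
    (h : cf (List.ofFn fun i => ((if i.val % 2 = 0 then 2 * a i else a i : ℤ) : ℚ))
      = (β : ℚ) / (2 * (α : ℚ))) :
    cf (List.ofFn fun i => ((if i.val % 2 = 0 then a i else 2 * a i : ℤ) : ℚ))
      = (β : ℚ) / (α : ℚ) := by
  set g : Fin n → ℚ := fun i => (a i : ℚ) with hg
  obtain ⟨e1, e2⟩ := dd_ofFn n g
  have hL : (List.ofFn fun i => ((if i.val % 2 = 0 then 2 * a i else a i : ℤ) : ℚ))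
      = dd true (List.ofFn g) := by
    rw [e1]; congr 1; funext i
    by_cases hi : i.val % 2 = 0 <;> simp [hi, hg]
  have hL' : (List.ofFn fun i => ((if i.val % 2 = 0 then a i else 2 * a i : ℤ) : ℚ))
      = dd false (List.ofFn g) := by
    rw [e2]; congr 1; funext i
    by_cases hi : i.val % 2 = 0 <;> simp [hi, hg]
  rw [hL'] at *
  rw [hL] at h
  rw [cf_dd, h]
  have hα' : (α : ℚ) ≠ 0 := Int.cast_ne_zero.mpr hα
  field_simp
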